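/- In ℝ(p), the Sylvester-matrix factorization of the instrument vector holds: for A with constant term 1, deg A = n, and B of degree ≤ m coprime with A, the vector φ̂ = (−pB/A², …, −pⁿB/A², 1/A, …, p^m/A)ᵀ equals S(−B, A) · (1/A²) · (p^{n+m}, …, p, 1)ᵀ, where S(−B,A) is the (n+m+1)×(n+m+1) Sylvester-type matrix built from the coefficients of −B and A; moreover S(−B,A) is invertible. -/
import Mathlib


open Polynomial

/-- Generalized Sylvester matrix `S(−B, A)` of size `(n+m+1)×(n+m+1)`: the first
`n` rows are the shifted coefficient vectors of `−B` (row `r` representing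
`p^{r+1}(−B)`), the last `m+1` rows are shifted coefficient vectors of `A`
(row `n+j` representing `pʲA`), columns indexed by descending monomials
`p^{n+m}, …, p, 1`. -/
noncomputable def sylvesterInstr (A B : ℝ[X]) (n m : ℕ) :
    Matrix (Fin (n + m + 1)) (Fin (n + m + 1)) ℝ := fun r k =>
  if (r : ℕ) < n then
    if (r : ℕ) + 1 + (k : ℕ) ≤ n + m then (-B).coeff (n + m - (k : ℕ) - ((r : ℕ) + 1)) else 0
  else
    if ((r : ℕ) - n) + (k : ℕ) ≤ n + m then A.coeff (n + m - (k : ℕ) - ((r : ℕ) - n)) else 0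

private lemma sum_coeff_smul_X_pow (N : ℕ) (P : ℝ[X]) (hP : P.natDegree < N + 1) :
    ∑ i : Fin (N + 1), P.coeff (i : ℕ) • (X : ℝ[X]) ^ (i : ℕ) = P := by
  rw [Fin.sum_univ_eq_sum_range (fun i => P.coeff i • (X : ℝ[X]) ^ i) (N + 1)]
  conv_rhs => rw [P.as_sum_range' (N + 1) hP]
  exact Finset.sum_congr rfl fun i _ => by rw [smul_eq_C_mul, C_mul_X_pow_eq_monomial]

private lemma sylvester_row_poly (A B : ℝ[X]) (n m : ℕ)
    (hAdeg : A.natDegree ≤ n) (hBdeg : B.natDegree ≤ m) (r : Fin (n + m + 1)) :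
    ∑ k : Fin (n + m + 1), sylvesterInstr A B n m r k • (X : ℝ[X]) ^ (n + m - (k : ℕ)) =
      if (r : ℕ) < n then X ^ ((r : ℕ) + 1) * (-B) else X ^ ((r : ℕ) - n) * A := by
  rw [← Equiv.sum_comp (Fin.revPerm : Equiv.Perm (Fin (n + m + 1)))
      (fun k => sylvesterInstr A B n m r k • (X : ℝ[X]) ^ (n + m - (k : ℕ)))]
  have hr' : (r : ℕ) ≤ n + m := Nat.lt_succ_iff.mp r.isLt
  by_cases hr : (r : ℕ) < n
  · rw [if_pos hr, mul_comm ((X : ℝ[X]) ^ ((r : ℕ) + 1)) (-B)]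
    have hdeg : ((-B) * X ^ ((r : ℕ) + 1)).natDegree < n + m + 1 := by
      have h1 := natDegree_mul_le (p := (-B : ℝ[X])) (q := X ^ ((r : ℕ) + 1))
      rw [natDegree_X_pow, natDegree_neg] at h1
      omega
    rw [← sum_coeff_smul_X_pow (n + m) _ hdeg]
    refine Finset.sum_congr rfl fun i _ => ?_
    have hi : (i : ℕ) ≤ n + m := Nat.lt_succ_iff.mp i.isLt
    have hrev : ((Fin.revPerm i : Fin (n + m + 1)) : ℕ) = n + m - (i : ℕ) := by
      simp [Fin.val_rev]
    have e1 : n + m - ((Fin.revPerm i : Fin (n + m + 1)) : ℕ) = (i : ℕ) := by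
      rw [hrev]; omega
    have e2 : sylvesterInstr A B n m r (Fin.revPerm i) =
        ((-B) * X ^ ((r : ℕ) + 1)).coeff (i : ℕ) := by
      rw [coeff_mul_X_pow']
      simp only [sylvesterInstr, hrev, if_pos hr]
      by_cases h : (r : ℕ) + 1 ≤ (i : ℕ)
      · rw [if_pos (by omega), if_pos h]
        congr 1
        omega
      · rw [if_neg (by omega), if_neg h]
    rw [e1, e2]
  · rw [if_neg hr]
    have hdeg : ((X : ℝ[X]) ^ ((r : ℕ) - n) * A).natDegree < n + m + 1 := by
      have h1 := natDegree_mul_le (p := (X : ℝ[X]) ^ ((r : ℕ) - n)) (q := A)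
      rw [natDegree_X_pow] at h1
      omega
    rw [mul_comm ((X : ℝ[X]) ^ ((r : ℕ) - n)) A]
    have hdeg' : (A * (X : ℝ[X]) ^ ((r : ℕ) - n)).natDegree < n + m + 1 := by
      rw [mul_comm]; exact hdeg
    rw [← sum_coeff_smul_X_pow (n + m) _ hdeg']
    refine Finset.sum_congr rfl fun i _ => ?_
    have hi : (i : ℕ) ≤ n + m := Nat.lt_succ_iff.mp i.isLt
    have hrev : ((Fin.revPerm i : Fin (n + m + 1)) : ℕ) = n + m - (i : ℕ) := by
      simp [Fin.val_rev]
    have e1 : n + m - ((Fin.revPerm i : Fin (n + m + 1)) : ℕ) = (i : ℕ) := by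
      rw [hrev]; omega
    have e2 : sylvesterInstr A B n m r (Fin.revPerm i) =
        (A * X ^ ((r : ℕ) - n)).coeff (i : ℕ) := by
      rw [coeff_mul_X_pow']
      simp only [sylvesterInstr, hrev, if_neg hr]
      by_cases h : (r : ℕ) - n ≤ (i : ℕ)
      · rw [if_pos (by omega), if_pos h]
        congr 1
        omega
      · rw [if_neg (by omega), if_neg h]
    rw [e1, e2]

/-- Sylvester-matrix factorization of the instrument vector: for `A` with
`A(0) = 1`, `deg A = n`, `deg B ≤ m` and `A, B` coprime, the vector
`φ̂ = (−pB/A², …, −pⁿB/A², 1/A, …, pᵐ/A)ᵀ` equals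
`S(−B,A) · (1/A²) · (p^{n+m}, …, p, 1)ᵀ`, and `S(−B,A)` is invertible. -/
theorem instrument_sylvester_factorization (n m : ℕ) (A B : ℝ[X])
    (hA0 : A.coeff 0 = 1) (hAdeg : A.natDegree = n) (hBdeg : B.natDegree ≤ m)
    (hcop : IsCoprime A B) :
    let Ar : RatFunc ℝ := algebraMap ℝ[X] (RatFunc ℝ) A
    let Br : RatFunc ℝ := algebraMap ℝ[X] (RatFunc ℝ) B
    (∀ r : Fin (n + m + 1),
      (if (r : ℕ) < n then -(RatFunc.X ^ ((r : ℕ) + 1)) * Br / Ar ^ 2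
        else RatFunc.X ^ ((r : ℕ) - n) / Ar) =
      ∑ k : Fin (n + m + 1),
        (sylvesterInstr A B n m r k) • ((RatFunc.X : RatFunc ℝ) ^ (n + m - (k : ℕ)) / Ar ^ 2)) ∧
    IsUnit (sylvesterInstr A B n m).det := by
  intro Ar Br
  have hA0' : A ≠ 0 := fun h => by simp [h] at hA0
  have hArd : Ar = algebraMap ℝ[X] (RatFunc ℝ) A := rfl
  have hBrd : Br = algebraMap ℝ[X] (RatFunc ℝ) B := rfl
  have hAr : algebraMap ℝ[X] (RatFunc ℝ) A ≠ 0 := RatFunc.algebraMap_ne_zero hA0'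
  constructor
  · intro r
    rw [hArd, hBrd]
    have key := sylvester_row_poly A B n m (le_of_eq hAdeg) hBdeg r
    have step1 : ∑ k : Fin (n + m + 1),
        (sylvesterInstr A B n m r k) •
          ((RatFunc.X : RatFunc ℝ) ^ (n + m - (k : ℕ)) / (algebraMap ℝ[X] (RatFunc ℝ) A) ^ 2)
        = (algebraMap ℝ[X] (RatFunc ℝ)
            (∑ k : Fin (n + m + 1), sylvesterInstr A B n m r k • (X : ℝ[X]) ^ (n + m - (k : ℕ))))
            / (algebraMap ℝ[X] (RatFunc ℝ) A) ^ 2 := by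
      rw [show (algebraMap ℝ[X] (RatFunc ℝ)
            (∑ k : Fin (n + m + 1), sylvesterInstr A B n m r k • (X : ℝ[X]) ^ (n + m - (k : ℕ))))
          = (IsScalarTower.toAlgHom ℝ ℝ[X] (RatFunc ℝ))
            (∑ k : Fin (n + m + 1), sylvesterInstr A B n m r k • (X : ℝ[X]) ^ (n + m - (k : ℕ)))
          from rfl, map_sum, Finset.sum_div]
      refine Finset.sum_congr rfl fun k _ => ?_
      rw [map_smul, smul_div_assoc]
      congr 2
      rw [show ((IsScalarTower.toAlgHom ℝ ℝ[X] (RatFunc ℝ)) ((X : ℝ[X]) ^ (n + m - (k : ℕ))))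
          = algebraMap ℝ[X] (RatFunc ℝ) ((X : ℝ[X]) ^ (n + m - (k : ℕ))) from rfl,
        map_pow, RatFunc.algebraMap_X]
    rw [step1, key]
    by_cases hr : (r : ℕ) < n
    · rw [if_pos hr, if_pos hr, map_mul, map_pow, map_neg, RatFunc.algebraMap_X]
      ring
    · rw [if_neg hr, if_neg hr, map_mul, map_pow, RatFunc.algebraMap_X, pow_two,
        mul_comm (algebraMap ℝ[X] (RatFunc ℝ) A) (algebraMap ℝ[X] (RatFunc ℝ) A)]
      rw [mul_comm (RatFunc.X ^ ((r : ℕ) - n)) (algebraMap ℝ[X] (RatFunc ℝ) A)]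
      rw [show (algebraMap ℝ[X] (RatFunc ℝ) A * RatFunc.X ^ ((r : ℕ) - n))
            / (algebraMap ℝ[X] (RatFunc ℝ) A * algebraMap ℝ[X] (RatFunc ℝ) A)
          = (RatFunc.X ^ ((r : ℕ) - n) * algebraMap ℝ[X] (RatFunc ℝ) A)
            / (algebraMap ℝ[X] (RatFunc ℝ) A * algebraMap ℝ[X] (RatFunc ℝ) A) from by ring_nf]
      rw [mul_div_mul_right _ _ hAr]
  · rw [isUnit_iff_ne_zero]
    intro hdet
    obtain ⟨c, hc0, hc⟩ := Matrix.exists_vecMul_eq_zero_iff.mpr hdet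
    set Cp : ℝ[X] := ∑ r : Fin (n + m + 1),
      if (r : ℕ) < n then C (c r) * X ^ ((r : ℕ) + 1) else 0 with hCp
    set Dp : ℝ[X] := ∑ r : Fin (n + m + 1),
      if (r : ℕ) < n then 0 else C (c r) * X ^ ((r : ℕ) - n) with hDp
    have hCdeg : Cp.natDegree ≤ n := by
      refine Polynomial.natDegree_sum_le_of_forall_le _ _ fun r _ => ?_
      split_ifs with h
      · exact le_trans (Polynomial.natDegree_C_mul_X_pow_le _ _) (by omega)
      · simp
    have hDdeg : Dp.natDegree ≤ m := by
      refine Polynomial.natDegree_sum_le_of_forall_le _ _ fun r _ => ?_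
      have hr' : (r : ℕ) ≤ n + m := Nat.lt_succ_iff.mp r.isLt
      split_ifs with h
      · simp
      · exact le_trans (Polynomial.natDegree_C_mul_X_pow_le _ _) (by omega)
    have hP : Cp * (-B) + Dp * A = 0 := by
      have hPdeg : (Cp * (-B) + Dp * A).natDegree < n + m + 1 := by
        have h1 := natDegree_mul_le (p := Cp) (q := -B)
        have h2 := natDegree_mul_le (p := Dp) (q := A)
        have h3 := natDegree_add_le (Cp * (-B)) (Dp * A)
        rw [natDegree_neg] at h1
        omega
      ext j
      rw [coeff_zero]
      by_cases hj : j ≤ n + m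
      · have hcol := congrFun hc ⟨n + m - j, by omega⟩
        simp only [Matrix.vecMul, dotProduct, Pi.zero_apply] at hcol
        rw [← hcol]
        rw [coeff_add, hCp, hDp, Finset.sum_mul, Finset.sum_mul,
          finset_sum_coeff, finset_sum_coeff, ← Finset.sum_add_distrib]
        refine Finset.sum_congr rfl fun r _ => ?_
        have hr' : (r : ℕ) ≤ n + m := Nat.lt_succ_iff.mp r.isLt
        by_cases hr : (r : ℕ) < n
        · rw [if_pos hr, if_pos hr, zero_mul, coeff_zero, add_zero]
          rw [show C (c r) * X ^ ((r : ℕ) + 1) * (-B)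
              = C (c r) * ((-B) * X ^ ((r : ℕ) + 1)) from by ring,
            coeff_C_mul, coeff_mul_X_pow']
          simp only [sylvesterInstr, if_pos hr, Fin.val_mk]
          by_cases h : (r : ℕ) + 1 ≤ j
          · rw [if_pos h, if_pos (by omega)]
            congr 2
            omega
          · rw [if_neg h, if_neg (by omega), mul_zero]
        · rw [if_neg hr, if_neg hr, zero_mul, coeff_zero, zero_add]
          rw [show C (c r) * X ^ ((r : ℕ) - n) * A
              = C (c r) * (A * X ^ ((r : ℕ) - n)) from by ring,
            coeff_C_mul, coeff_mul_X_pow']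
          simp only [sylvesterInstr, if_neg hr, Fin.val_mk]
          by_cases h : (r : ℕ) - n ≤ j
          · rw [if_pos h, if_pos (by omega)]
            congr 2
            omega
          · rw [if_neg h, if_neg (by omega), mul_zero]
      · exact coeff_eq_zero_of_natDegree_lt (by omega)
    have hCB : Cp * B = A * Dp := by linear_combination -hP
    have hAC : A ∣ Cp := hcop.dvd_of_dvd_mul_right ⟨Dp, hCB⟩
    have hCp00 : Cp.coeff 0 = 0 := by
      rw [hCp, finset_sum_coeff]
      refine Finset.sum_eq_zero fun r _ => ?_
      split_ifs with h
      · rw [coeff_C_mul, coeff_X_pow, if_neg (by omega), mul_zero]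
      · rw [coeff_zero]
    have hCp0 : Cp = 0 := by
      obtain ⟨q, hq⟩ := hAC
      by_cases hq0 : q = 0
      · rw [hq, hq0, mul_zero]
      · exfalso
        have hdeg : Cp.natDegree = n + q.natDegree := by
          rw [hq, natDegree_mul hA0' hq0, hAdeg]
        have hqdeg : q.natDegree = 0 := by omega
        have hq00 : q.coeff 0 = 0 := by
          have h := congrArg (fun p : ℝ[X] => p.coeff 0) hq
          simp only [mul_coeff_zero, hA0, one_mul, hCp00] at h
          exact h.symm
        exact hq0 (by rw [eq_C_of_natDegree_eq_zero hqdeg, hq00, map_zero])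
    have hDp0 : Dp = 0 := by
      rw [hCp0, zero_mul] at hCB
      rcases mul_eq_zero.mp hCB.symm with h | h
      · exact absurd h hA0'
      · exact h
    apply hc0
    funext i
    simp only [Pi.zero_apply]
    by_cases hi : (i : ℕ) < n
    · have h := congrArg (fun p : ℝ[X] => p.coeff ((i : ℕ) + 1)) hCp0
      simp only [hCp, finset_sum_coeff, coeff_zero] at h
      rw [Finset.sum_eq_single_of_mem i (Finset.mem_univ i)] at h
      · rw [if_pos hi, coeff_C_mul, coeff_X_pow, if_pos rfl, mul_one] at h
        exact h
      · intro b _ hb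
        have hbi : (b : ℕ) ≠ (i : ℕ) := fun hh => hb (Fin.ext hh)
        split_ifs with hbn
        · rw [coeff_C_mul, coeff_X_pow, if_neg (by omega), mul_zero]
        · rw [coeff_zero]
    · have h := congrArg (fun p : ℝ[X] => p.coeff ((i : ℕ) - n)) hDp0
      simp only [hDp, finset_sum_coeff, coeff_zero] at h
      rw [Finset.sum_eq_single_of_mem i (Finset.mem_univ i)] at h
      · rw [if_neg hi, coeff_C_mul, coeff_X_pow, if_pos rfl, mul_one] at h
        exact h
      · intro b _ hb
        have hbi : (b : ℕ) ≠ (i : ℕ) := fun hh => hb (Fin.ext hh)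
        split_ifs with hbn
        · rw [coeff_zero]
        · rw [coeff_C_mul, coeff_X_pow, if_neg (by omega), mul_zero]
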